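/- Let r, k be positive integers, let ξ_1 ≤ ξ_2 ≤ ⋯ ≤ ξ_{k+1} be reals with τ_j = ξ_{j+1} − ξ_j for j = 1,…,k, let c_0,…,c_{r−1} and s_1,…,s_k be reals, and define a_{j,i} by the recursion a_{0,i} = c_i for i = 0,…,r−1 and a_{j,r−p} = Σ_{i=1}^{p} a_{j−1,r−i} τ_j^{p−i}/(p−i)! + s_j τ_j^{p}/p! for j = 1,…,k and p = 1,…,r. Let φ : ℝ → ℝ be r-times differentiable on [ξ_1, ξ_{k+1}] with φ^{(i)}(ξ_1) ≥ c_i for i = 0,…,r−1 and φ^{(r)}(t) ≥ s_j for all t ∈ [ξ_j, ξ_{j+1}] and all j = 1,…,k. Then: (a) for every j = 1,…,k and every t ∈ [ξ_j, ξ_{j+1}], φ(t) ≥ Σ_{i=1}^{r} a_{j−1,r−i}(t−ξ_j)^{r−i}/(r−i)! + s_j (t−ξ_j)^{r}/r!; and (b) φ^{(r−p)}(ξ_{j+1}) ≥ a_{j,r−p} for every j = 1,…,k and every p = 1,…,r. -/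

import Mathlib

open Set

/-!
On one segment `[A, B]`, integrating `s ≤ φ⁽ʳ⁾` up `p` times from `A` (each step is the
comparison principle `image_le_of_deriv_right_le_deriv_boundary`) bounds `φ⁽ʳ⁻ᵖ⁾` below by the
Taylor polynomial of `φ⁽ʳ⁻ᵖ⁾` at `A` in which the derivative bounds at `A` replace the derivatives
and `s` replaces `φ⁽ʳ⁾`. At the right endpoint `A + τ` this polynomial is exactly the recursion
defining `a j (r - p)`, so induction over the segments carries the bounds from `ξ 1` to every `ξ j`.
-/

theorem hasDerivAt_pow_succ_div_factorial (n : ℕ) (x : ℝ) :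
    HasDerivAt (fun x : ℝ => x ^ (n + 1) / ((n + 1).factorial : ℝ))
      (x ^ n / (n.factorial : ℝ)) x := by
  refine ((hasDerivAt_pow (n + 1) x).div_const ((n + 1).factorial : ℝ)).congr_deriv ?_
  rw [Nat.factorial_succ, Nat.add_sub_cancel]
  push_cast
  field_simp

/-- `d i` stands for a lower bound of `φ⁽ʳ⁻ⁱ⁾` at the left endpoint of a segment and `x` for the
distance from it. -/
noncomputable def taylorLowerBound (d : ℕ → ℝ) (s : ℝ) (p : ℕ) (x : ℝ) : ℝ :=
  (∑ i ∈ Finset.Icc 1 p, d i * x ^ (p - i) / (Nat.factorial (p - i) : ℝ))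
    + s * x ^ p / (Nat.factorial p : ℝ)

theorem taylorLowerBound_succ (d : ℕ → ℝ) (s : ℝ) (p : ℕ) (x : ℝ) :
    taylorLowerBound d s (p + 1) x = d (p + 1)
      + (∑ i ∈ Finset.Icc 1 p, d i * (x ^ (p - i + 1) / ((p - i + 1).factorial : ℝ)))
      + s * (x ^ (p + 1) / ((p + 1).factorial : ℝ)) := by
  rw [taylorLowerBound, Finset.sum_Icc_succ_top (by omega), Nat.sub_self]
  have hsum : ∀ i ∈ Finset.Icc 1 p, d i * x ^ (p + 1 - i) / ((p + 1 - i).factorial : ℝ)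
      = d i * (x ^ (p - i + 1) / ((p - i + 1).factorial : ℝ)) := by
    intro i hi
    rw [Finset.mem_Icc] at hi
    rw [show p + 1 - i = p - i + 1 by omega, mul_div_assoc]
  rw [Finset.sum_congr rfl hsum]
  simp only [pow_zero, Nat.factorial_zero, Nat.cast_one, div_one, mul_one]
  ring

theorem taylorLowerBound_succ_zero (d : ℕ → ℝ) (s : ℝ) (p : ℕ) :
    taylorLowerBound d s (p + 1) 0 = d (p + 1) := by
  simp [taylorLowerBound_succ]

theorem hasDerivAt_taylorLowerBound (d : ℕ → ℝ) (s : ℝ) (p : ℕ) (x : ℝ) :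
    HasDerivAt (taylorLowerBound d s (p + 1)) (taylorLowerBound d s p x) x := by
  have hsum := HasDerivAt.fun_sum (u := Finset.Icc 1 p) (x := x) fun i _ =>
    (hasDerivAt_pow_succ_div_factorial (p - i) x).const_mul (d i)
  have h := ((hasDerivAt_const x (d (p + 1))).add hsum).add
    ((hasDerivAt_pow_succ_div_factorial p x).const_mul s)
  rw [funext (taylorLowerBound_succ d s p)]
  refine h.congr_deriv ?_
  simp only [taylorLowerBound, mul_div_assoc, zero_add]

theorem taylorLowerBound_le_iteratedDeriv {r : ℕ} {A B s : ℝ} {d : ℕ → ℝ} {φ : ℝ → ℝ}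
    (hdiff : ∀ i < r, ∀ t ∈ Icc A B,
      HasDerivAt (iteratedDeriv i φ) (iteratedDeriv (i + 1) φ t) t)
    (hinit : ∀ i ∈ Finset.Icc 1 r, d i ≤ iteratedDeriv (r - i) φ A)
    (hs : ∀ t ∈ Icc A B, s ≤ iteratedDeriv r φ t) :
    ∀ p ≤ r, ∀ t ∈ Icc A B, taylorLowerBound d s p (t - A) ≤ iteratedDeriv (r - p) φ t := by
  intro p
  induction p with
  | zero => intro _ t ht; simpa [taylorLowerBound] using hs t ht
  | succ p ih =>
    intro hp
    have hderiv : ∀ t ∈ Icc A B,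
        HasDerivAt (iteratedDeriv (r - (p + 1)) φ) (iteratedDeriv (r - p) φ t) t := by
      intro t ht
      simpa only [show r - (p + 1) + 1 = r - p by omega] using hdiff (r - (p + 1)) (by omega) t ht
    have hpoly : ∀ t, HasDerivAt (fun t => taylorLowerBound d s (p + 1) (t - A))
        (taylorLowerBound d s p (t - A)) t :=
      fun t => (hasDerivAt_taylorLowerBound d s p (t - A)).comp_sub_const t A
    have hstart : taylorLowerBound d s (p + 1) (A - A) ≤ iteratedDeriv (r - (p + 1)) φ A := by
      rw [sub_self, taylorLowerBound_succ_zero]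
      exact hinit (p + 1) (Finset.mem_Icc.2 ⟨by omega, hp⟩)
    exact image_le_of_deriv_right_le_deriv_boundary
      (fun t _ => (hpoly t).continuousAt.continuousWithinAt)
      (fun t _ => (hpoly t).hasDerivWithinAt) hstart
      (fun t ht => (hderiv t ht).continuousAt.continuousWithinAt)
      (fun t ht => (hderiv t (Ico_subset_Icc_self ht)).hasDerivWithinAt)
      (fun t ht => ih (by omega) t (Ico_subset_Icc_self ht))

theorem stmt_11_general
    (r k : ℕ)
    (ξ τ s c : ℕ → ℝ) (a : ℕ → ℕ → ℝ)
    (hξmono : ∀ j ∈ Finset.Icc 1 k, ξ j ≤ ξ (j + 1))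
    (hτ : ∀ j ∈ Finset.Icc 1 k, τ j = ξ (j + 1) - ξ j)
    (ha0 : ∀ i < r, a 0 i = c i)
    (harec : ∀ j ∈ Finset.Icc 1 k, ∀ p ∈ Finset.Icc 1 r,
      a j (r - p) = (∑ i ∈ Finset.Icc 1 p,
          a (j - 1) (r - i) * τ j ^ (p - i) / (Nat.factorial (p - i) : ℝ))
        + s j * τ j ^ p / (Nat.factorial p : ℝ))
    (φ : ℝ → ℝ)
    -- φ is r-times differentiable on [ξ 1, ξ (k+1)]
    (hdiff : ∀ i < r, ∀ t ∈ Set.Icc (ξ 1) (ξ (k + 1)),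
      HasDerivAt (iteratedDeriv i φ) (iteratedDeriv (i + 1) φ t) t)
    (hinit : ∀ i < r, iteratedDeriv i φ (ξ 1) ≥ c i)
    (hs : ∀ j ∈ Finset.Icc 1 k, ∀ t ∈ Set.Icc (ξ j) (ξ (j + 1)),
      iteratedDeriv r φ t ≥ s j) :
    -- (a) polynomial lower bound on φ on each segment
    (∀ j ∈ Finset.Icc 1 k, ∀ t ∈ Set.Icc (ξ j) (ξ (j + 1)),
      φ t ≥ (∑ i ∈ Finset.Icc 1 r,
          a (j - 1) (r - i) * (t - ξ j) ^ (r - i) / (Nat.factorial (r - i) : ℝ))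
        + s j * (t - ξ j) ^ r / (Nat.factorial r : ℝ)) ∧
    -- (b) derivative lower bounds at the partition points
    (∀ j ∈ Finset.Icc 1 k, ∀ p ∈ Finset.Icc 1 r,
      iteratedDeriv (r - p) φ (ξ (j + 1)) ≥ a j (r - p)) := by
  have hsub : ∀ j ∈ Finset.Icc 1 k, Icc (ξ j) (ξ (j + 1)) ⊆ Icc (ξ 1) (ξ (k + 1)) := by
    have hmono : MonotoneOn ξ (Set.Icc 1 (k + 1)) := monotoneOn_of_le_add_one ordConnected_Icc
      fun j _ hj hj1 => hξmono j (Finset.mem_Icc.2 ⟨hj.1, Nat.add_le_add_iff_right.1 hj1.2⟩)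
    intro j hj
    rw [Finset.mem_Icc] at hj
    exact Icc_subset_Icc (hmono ⟨le_rfl, by omega⟩ ⟨hj.1, by omega⟩ hj.1)
      (hmono ⟨by omega, by omega⟩ ⟨by omega, le_rfl⟩ (by omega))
  have hsegment : ∀ j ∈ Finset.Icc 1 k, (∀ i < r, a (j - 1) i ≤ iteratedDeriv i φ (ξ j)) →
      ∀ p ≤ r, ∀ t ∈ Icc (ξ j) (ξ (j + 1)), taylorLowerBound (fun i => a (j - 1) (r - i)) (s j)
        p (t - ξ j) ≤ iteratedDeriv (r - p) φ t :=
    fun j hj hstart => taylorLowerBound_le_iteratedDeriv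
      (fun i hi t ht => hdiff i hi t (hsub j hj ht))
      (fun i hi => hstart (r - i) (by rw [Finset.mem_Icc] at hi; omega)) (hs j hj)
  have hnext : ∀ j ∈ Finset.Icc 1 k, (∀ i < r, a (j - 1) i ≤ iteratedDeriv i φ (ξ j)) →
      ∀ p ∈ Finset.Icc 1 r, a j (r - p) ≤ iteratedDeriv (r - p) φ (ξ (j + 1)) := by
    intro j hj hstart p hp
    rw [harec j hj p hp, hτ j hj]
    exact hsegment j hj hstart p (Finset.mem_Icc.1 hp).2 _ (right_mem_Icc.2 (hξmono j hj))
  have hpoints : ∀ j ≤ k, ∀ i < r, a j i ≤ iteratedDeriv i φ (ξ (j + 1)) := by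
    intro j
    induction j with
    | zero => intro _ i hi; rw [ha0 i hi]; exact hinit i hi
    | succ j ih =>
      intro hj i hi
      simpa only [Nat.sub_sub_self hi.le] using hnext (j + 1) (Finset.mem_Icc.2 ⟨by omega, hj⟩)
        (ih (by omega)) (r - i) (Finset.mem_Icc.2 ⟨by omega, by omega⟩)
  have hstart : ∀ j ∈ Finset.Icc 1 k, ∀ i < r, a (j - 1) i ≤ iteratedDeriv i φ (ξ j) := by
    intro j hj
    obtain ⟨m, rfl⟩ : ∃ m, j = m + 1 := ⟨j - 1, by rw [Finset.mem_Icc] at hj; omega⟩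
    exact hpoints m (by rw [Finset.mem_Icc] at hj; omega)
  refine ⟨fun j hj t ht => ?_, fun j hj => hnext j hj (hstart j hj)⟩
  have := hsegment j hj (hstart j hj) r le_rfl t ht
  rwa [Nat.sub_self, iteratedDeriv_zero] at this

/-- **Multi-segment propagation estimate (inductive core of the proof of Theorem 1 of
the paper).** Per-segment lower bounds `s j` on the `r`-th derivative of the barrier
value `φ` propagate through the partition points `ξ j` via the recursion defining the
constants `a j i`, yielding (a) the polynomial lower bounds on `φ` on each segment and
(b) the lower bounds `a j (r-p)` on the derivatives at the partition points. -/
theorem stmt_11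
    (r k : ℕ) (hr : 0 < r) (hk : 0 < k)
    (ξ τ s c : ℕ → ℝ) (a : ℕ → ℕ → ℝ)
    (hξmono : ∀ j ∈ Finset.Icc 1 k, ξ j ≤ ξ (j + 1))
    (hτ : ∀ j ∈ Finset.Icc 1 k, τ j = ξ (j + 1) - ξ j)
    (ha0 : ∀ i < r, a 0 i = c i)
    (harec : ∀ j ∈ Finset.Icc 1 k, ∀ p ∈ Finset.Icc 1 r,
      a j (r - p) = (∑ i ∈ Finset.Icc 1 p,
          a (j - 1) (r - i) * τ j ^ (p - i) / (Nat.factorial (p - i) : ℝ))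
        + s j * τ j ^ p / (Nat.factorial p : ℝ))
    (φ : ℝ → ℝ)
    -- φ is r-times differentiable on [ξ 1, ξ (k+1)]
    (hdiff : ∀ i < r, ∀ t ∈ Set.Icc (ξ 1) (ξ (k + 1)),
      HasDerivAt (iteratedDeriv i φ) (iteratedDeriv (i + 1) φ t) t)
    (hinit : ∀ i < r, iteratedDeriv i φ (ξ 1) ≥ c i)
    (hs : ∀ j ∈ Finset.Icc 1 k, ∀ t ∈ Set.Icc (ξ j) (ξ (j + 1)),
      iteratedDeriv r φ t ≥ s j) :
    -- (a) polynomial lower bound on φ on each segment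
    (∀ j ∈ Finset.Icc 1 k, ∀ t ∈ Set.Icc (ξ j) (ξ (j + 1)),
      φ t ≥ (∑ i ∈ Finset.Icc 1 r,
          a (j - 1) (r - i) * (t - ξ j) ^ (r - i) / (Nat.factorial (r - i) : ℝ))
        + s j * (t - ξ j) ^ r / (Nat.factorial r : ℝ)) ∧
    -- (b) derivative lower bounds at the partition points
    (∀ j ∈ Finset.Icc 1 k, ∀ p ∈ Finset.Icc 1 r,
      iteratedDeriv (r - p) φ (ξ (j + 1)) ≥ a j (r - p)) :=
  stmt_11_general r k ξ τ s c a hξmono hτ ha0 harec φ hdiff hinit hs
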